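/- The vertical gluing anomaly satisfies the cocycle condition: if M_1, M_2, M_3 are three vertically composable 2-morphisms of Co, then k(M_1, M_2·M_3) · k(M_2, M_3) = k(M_1·M_2, M_3) · k(M_1, M_2) in K. -/

import Mathlib

/-- Abstract data of the extended TQFT `X`: the 2-morphisms of `Co` (classes of
decorated cobordisms with corners `Σ_t ⇒ Σ_s : S^{⊔m} → S^{⊔n}`), their
presentations by special ribbon graphs, and the entries
`X([M])_{ij} = τ(Fill_c(M)_{ij})` of the associated 2-homomorphisms of
Kapranov–Voevodsky 2-vector spaces. -/
structure XTheory : Type 1 where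
  /-- the ground ring `K = Hom(𝟙, 𝟙)` of the modular category -/
  K : Type
  [instK : CommRing K]
  /-- the rank `D` -/
  D : Kˣ
  /-- the element `Δ = Σ_i v_i⁻¹ dim(V_i)²` -/
  Δ : Kˣ
  /-- the index set `I` of the `𝐤` simple objects -/
  Idx : Type
  /-- decorated types -/
  DType : Type
  /-- 2-morphisms of `Co`: classes of decorated cobordisms with corners
  `Σ_t ⇒ Σ_s : S^{⊔m} → S^{⊔n}` -/
  Co2 : ℕ → ℕ → DType → DType → Type
  /-- vertical composition of 2-morphisms of `Co` -/
  vcomp : ∀ {m n : ℕ} {t₁ t₂ t₃ : DType}, Co2 m n t₁ t₂ → Co2 m n t₂ t₃ → Co2 m n t₁ t₃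
  /-- special ribbon graphs presenting 2-morphisms -/
  SRib : ℕ → ℕ → DType → DType → Type
  /-- `represents Ω M` : `Ω` is a special ribbon graph for `M` -/
  represents : ∀ {m n : ℕ} {t s : DType}, SRib m n t s → Co2 m n t s → Prop
  /-- vertical concatenation of special ribbon graphs -/
  vrib : ∀ {m n : ℕ} {t₁ t₂ t₃ : DType}, SRib m n t₁ t₂ → SRib m n t₂ t₃ → SRib m n t₁ t₃
  /-- the signature `σ(L)` of the surgery link of a special ribbon graph -/
  sig : ∀ {m n : ℕ} {t s : DType}, SRib m n t s → ℤ
  /-- the `(i,j)`-entry `X(Σ_t)_{ij} = ⊕_{ζ ∈ Iᵗ} Hom(𝟙, Φ(t; ζ; i, j))` of the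
  2-matrix `X(Σ_t)` -/
  XMod : ∀ (m n : ℕ), DType → (Fin m → Idx) → (Fin n → Idx) → Type
  [instXA : ∀ m n t i j, AddCommGroup (XMod m n t i j)]
  [instXM : ∀ m n t i j, Module K (XMod m n t i j)]
  /-- the `(i,j)`-entry `X([M])_{ij} = τ(Fill_c(M)_{ij})` of the 2-homomorphism
  `X([M])` -/
  X2 : ∀ {m n : ℕ} {t s : DType}, Co2 m n t s →
      ∀ (i : Fin m → Idx) (j : Fin n → Idx), XMod m n t i j →ₗ[K] XMod m n s i j

attribute [instance] XTheory.instK XTheory.instXA XTheory.instXM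

/-- The vertical gluing anomaly `k = (DΔ)^{σ(L_a)+σ(L_b)−σ(L)}` determined by
special ribbon graphs `Ωa`, `Ωb` (where `L` is the surgery link of the vertical
concatenation `Ωa · Ωb`). -/
def XTheory.anomaly (T : XTheory) {m n : ℕ} {ta tb tc : T.DType}
    (Ωa : T.SRib m n ta tb) (Ωb : T.SRib m n tb tc) : T.K :=
  (((T.D * T.Δ) ^ (T.sig Ωa + T.sig Ωb - T.sig (T.vrib Ωa Ωb)) : (T.K)ˣ) : T.K)

namespace XTheory

variable (T : XTheory) {m n : ℕ} {t₁ t₂ t₃ t₄ : T.DType}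
  (Ω₁ : T.SRib m n t₁ t₂) (Ω₂ : T.SRib m n t₂ t₃) (Ω₃ : T.SRib m n t₃ t₄)

theorem anomaly_vrib_right_mul_anomaly :
    T.anomaly Ω₁ (T.vrib Ω₂ Ω₃) * T.anomaly Ω₂ Ω₃ =
      (((T.D * T.Δ) ^ (T.sig Ω₁ + T.sig Ω₂ + T.sig Ω₃ - T.sig (T.vrib Ω₁ (T.vrib Ω₂ Ω₃))) :
        (T.K)ˣ) : T.K) := by
  rw [anomaly, anomaly, ← Units.val_mul, ← zpow_add]
  congr 2
  ring

theorem anomaly_vrib_left_mul_anomaly :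
    T.anomaly (T.vrib Ω₁ Ω₂) Ω₃ * T.anomaly Ω₁ Ω₂ =
      (((T.D * T.Δ) ^ (T.sig Ω₁ + T.sig Ω₂ + T.sig Ω₃ - T.sig (T.vrib (T.vrib Ω₁ Ω₂) Ω₃)) :
        (T.K)ˣ) : T.K) := by
  rw [anomaly, anomaly, ← Units.val_mul, ← zpow_add]
  congr 2
  ring

end XTheory

theorem anomaly_cocycle_general (T : XTheory) {m n : ℕ} {t₁ t₂ t₃ t₄ : T.DType}
    (Ω₁ : T.SRib m n t₁ t₂) (Ω₂ : T.SRib m n t₂ t₃) (Ω₃ : T.SRib m n t₃ t₄)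
    -- vertical concatenation of ribbon graphs is associative
    (hassoc : T.vrib (T.vrib Ω₁ Ω₂) Ω₃ = T.vrib Ω₁ (T.vrib Ω₂ Ω₃)) :
    T.anomaly Ω₁ (T.vrib Ω₂ Ω₃) * T.anomaly Ω₂ Ω₃
      = T.anomaly (T.vrib Ω₁ Ω₂) Ω₃ * T.anomaly Ω₁ Ω₂ := by
  rw [T.anomaly_vrib_right_mul_anomaly, T.anomaly_vrib_left_mul_anomaly, hassoc]

/-- The vertical gluing anomaly satisfies the cocycle condition:
for three vertically composable 2-morphisms `M₁`, `M₂`, `M₃` of `Co` (represented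
by special ribbon graphs `Ω₁`, `Ω₂`, `Ω₃`, so that `M₂ · M₃` is represented by
`Ω₂ · Ω₃` and `M₁ · M₂` by `Ω₁ · Ω₂`),
`k(M₁, M₂·M₃) · k(M₂, M₃) = k(M₁·M₂, M₃) · k(M₁, M₂)` in `K`. -/
theorem anomaly_cocycle (T : XTheory) {m n : ℕ} {t₁ t₂ t₃ t₄ : T.DType}
    (M₁ : T.Co2 m n t₁ t₂) (M₂ : T.Co2 m n t₂ t₃) (M₃ : T.Co2 m n t₃ t₄)
    (Ω₁ : T.SRib m n t₁ t₂) (Ω₂ : T.SRib m n t₂ t₃) (Ω₃ : T.SRib m n t₃ t₄)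
    (h₁ : T.represents Ω₁ M₁) (h₂ : T.represents Ω₂ M₂) (h₃ : T.represents Ω₃ M₃)
    (h₁₂ : T.represents (T.vrib Ω₁ Ω₂) (T.vcomp M₁ M₂))
    (h₂₃ : T.represents (T.vrib Ω₂ Ω₃) (T.vcomp M₂ M₃))
    -- vertical concatenation of ribbon graphs is associative
    (hassoc : T.vrib (T.vrib Ω₁ Ω₂) Ω₃ = T.vrib Ω₁ (T.vrib Ω₂ Ω₃)) :
    T.anomaly Ω₁ (T.vrib Ω₂ Ω₃) * T.anomaly Ω₂ Ω₃
      = T.anomaly (T.vrib Ω₁ Ω₂) Ω₃ * T.anomaly Ω₁ Ω₂ :=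
  anomaly_cocycle_general T Ω₁ Ω₂ Ω₃ hassoc
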